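/- Let λ ∈ ℝ, let U be an open subset of the half-plane {(r,z) ∈ ℝ² : r > 0}, and let ψ : U → ℝ be twice continuously differentiable and satisfy ∂²ψ/∂r² − (1/r)∂ψ/∂r + ∂²ψ/∂z² = −λ²ψ on U. Define the axisymmetric region Ω = {(x,y,z) ∈ ℝ³ : (√(x²+y²), z) ∈ U} and the vector field B : Ω → ℝ³ whose Cartesian components, written with r = √(x²+y²), are B₁ = −(∂ψ/∂z)(r,z)·x/r² − λψ(r,z)·y/r², B₂ = −(∂ψ/∂z)(r,z)·y/r² + λψ(r,z)·x/r², B₃ = (∂ψ/∂r)(r,z)/r. Then B satisfies the Beltrami equation ∇×B = λB on Ω, and moreover B·∇Ψ = 0 on Ω, where Ψ(x,y,z) = ψ(√(x²+y²), z); in particular B is tangent to the level surfaces of the flux function Ψ. -/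

import Mathlib

/-!
In cylindrical coordinates an axisymmetric field `B_r r̂ + B_φ φ̂ + B_z ẑ` has curl
`(-∂_z B_φ) r̂ + (∂_z B_r - ∂_r B_z) φ̂ + (∂_r B_φ + B_φ / r) ẑ`. For `B_r = -ψ_z / r`,
`B_φ = λψ / r`, `B_z = ψ_r / r` the `r̂`- and `ẑ`-components of this are `λB_r` and `λB_z`
identically, while the `φ̂`-component is `-(ψ_rr - ψ_r / r + ψ_zz) / r`, which the
Grad–Shafranov equation turns into `λ²ψ / r = λB_φ`. Since `∇Ψ = ψ_r r̂ + ψ_z ẑ`, also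
`B · ∇Ψ = (-ψ_z ψ_r + ψ_r ψ_z) / r = 0`.
-/

/-- The `i`-th partial derivative of a real-valued function on `ℝ³`. -/
noncomputable def pd (i : Fin 3) (f : (Fin 3 → ℝ) → ℝ) (x : Fin 3 → ℝ) : ℝ :=
  fderiv ℝ f x (Pi.single i 1)

/-- The curl of a real vector field on `ℝ³`, defined componentwise. -/
noncomputable def curl (F : (Fin 3 → ℝ) → (Fin 3 → ℝ)) (x : Fin 3 → ℝ) : Fin 3 → ℝ :=
  ![pd 1 (fun y => F y 2) x - pd 2 (fun y => F y 1) x,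
    pd 2 (fun y => F y 0) x - pd 0 (fun y => F y 2) x,
    pd 0 (fun y => F y 1) x - pd 1 (fun y => F y 0) x]

open ContinuousLinearMap

theorem HasFDerivAt.div {𝕜 E : Type*} [NontriviallyNormedField 𝕜] [NormedAddCommGroup E]
    [NormedSpace 𝕜 E] {c d : E → 𝕜} {c' d' : E →L[𝕜] 𝕜} {x : E}
    (hc : HasFDerivAt c c' x) (hd : HasFDerivAt d d' x) (hx : d x ≠ 0) :
    HasFDerivAt (fun y => c y / d y) ((d x)⁻¹ • c' - (c x / d x ^ 2) • d') x := by
  simp_rw [div_eq_mul_inv]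
  refine (hc.mul ((hasDerivAt_inv hx).comp_hasFDerivAt x hd)).congr_fderiv ?_
  ext v
  simp only [Function.comp_apply, add_apply, sub_apply, smul_apply, smul_eq_mul, neg_mul, mul_neg]
  ring

theorem ContDiffAt.differentiableAt_fderiv_apply {𝕜 E F : Type*} [NontriviallyNormedField 𝕜]
    [NormedAddCommGroup E] [NormedSpace 𝕜 E] [NormedAddCommGroup F] [NormedSpace 𝕜 F]
    {f : E → F} {x : E} {n : WithTop ℕ∞} (hf : ContDiffAt 𝕜 n f x) (hn : 2 ≤ n) (v : E) :
    DifferentiableAt 𝕜 (fun y => fderiv 𝕜 f y v) x :=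
  ((hf.fderiv_right (m := 1) hn).differentiableAt one_ne_zero).clm_apply
    (differentiableAt_const v)

theorem ContinuousLinearMap.apply_pair {𝕜 M : Type*} [Semiring 𝕜] [TopologicalSpace 𝕜]
    [AddCommMonoid M] [Module 𝕜 M] [TopologicalSpace M] (L : 𝕜 × 𝕜 →L[𝕜] M) (a b : 𝕜) :
    L (a, b) = a • L (1, 0) + b • L (0, 1) := by
  rw [← map_smul, ← map_smul, ← map_add]
  simp

noncomputable def partialR (f : ℝ × ℝ → ℝ) (p : ℝ × ℝ) : ℝ := fderiv ℝ f p (1, 0)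

noncomputable def partialZ (f : ℝ × ℝ → ℝ) (p : ℝ × ℝ) : ℝ := fderiv ℝ f p (0, 1)

lemma HasFDerivAt.partialR_eq {f : ℝ × ℝ → ℝ} {f' : ℝ × ℝ →L[ℝ] ℝ} {p : ℝ × ℝ}
    (h : HasFDerivAt f f' p) : partialR f p = f' (1, 0) := by
  rw [partialR, h.fderiv]

lemma HasFDerivAt.partialZ_eq {f : ℝ × ℝ → ℝ} {f' : ℝ × ℝ →L[ℝ] ℝ} {p : ℝ × ℝ}
    (h : HasFDerivAt f f' p) : partialZ f p = f' (0, 1) := by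
  rw [partialZ, h.fderiv]

noncomputable def cylCoords (x : Fin 3 → ℝ) : ℝ × ℝ := (√(x 0 ^ 2 + x 1 ^ 2), x 2)

/-- The vector `a r̂ + b φ̂ + c ẑ` at the point `x`. -/
noncomputable def cylVec (x : Fin 3 → ℝ) (a b c : ℝ) : Fin 3 → ℝ :=
  ![a * (x 0 / (cylCoords x).1) - b * (x 1 / (cylCoords x).1),
    a * (x 1 / (cylCoords x).1) + b * (x 0 / (cylCoords x).1), c]

noncomputable def cylField (Fr Fφ Fz : ℝ × ℝ → ℝ) (x : Fin 3 → ℝ) : Fin 3 → ℝ :=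
  cylVec x (Fr (cylCoords x)) (Fφ (cylCoords x)) (Fz (cylCoords x))

noncomputable def gradShafranovField (lam : ℝ) (ψ : ℝ × ℝ → ℝ) : (Fin 3 → ℝ) → Fin 3 → ℝ :=
  cylField (fun p => -partialZ ψ p / p.1) (fun p => lam * ψ p / p.1) (fun p => partialR ψ p / p.1)

lemma hasFDerivAt_coord (i : Fin 3) (x : Fin 3 → ℝ) :
    HasFDerivAt (fun y : Fin 3 → ℝ => y i) (proj i : (Fin 3 → ℝ) →L[ℝ] ℝ) x :=
  hasFDerivAt_apply i x

lemma sq_cylCoords_fst (x : Fin 3 → ℝ) : (cylCoords x).1 ^ 2 = x 0 ^ 2 + x 1 ^ 2 :=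
  Real.sq_sqrt (by positivity)

lemma hasFDerivAt_cylCoords_fst {x : Fin 3 → ℝ} (hx : 0 < (cylCoords x).1) :
    HasFDerivAt (fun y => (cylCoords y).1)
      ((x 0 / (cylCoords x).1) • (proj 0 : (Fin 3 → ℝ) →L[ℝ] ℝ)
        + (x 1 / (cylCoords x).1) • proj 1) x := by
  have hsq := ((hasFDerivAt_coord 0 x).pow 2).add ((hasFDerivAt_coord 1 x).pow 2)
  refine (hsq.sqrt (Real.sqrt_pos.mp hx).ne').congr_fderiv ?_
  ext v
  simp only [Pi.add_apply, one_div, mul_inv_rev, Nat.add_one_sub_one, pow_one, nsmul_eq_mul,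
    Nat.cast_ofNat, smul_add, add_apply, smul_apply, proj_apply, smul_eq_mul, cylCoords]
  field_simp

lemma hasFDerivAt_comp_cylCoords {f : ℝ × ℝ → ℝ} {x : Fin 3 → ℝ} (hx : 0 < (cylCoords x).1)
    (hf : DifferentiableAt ℝ f (cylCoords x)) :
    HasFDerivAt (fun y => f (cylCoords y))
      ((x 0 / (cylCoords x).1 * partialR f (cylCoords x)) • (proj 0 : (Fin 3 → ℝ) →L[ℝ] ℝ)
        + (x 1 / (cylCoords x).1 * partialR f (cylCoords x)) • proj 1
        + partialZ f (cylCoords x) • proj 2) x := by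
  refine (hf.hasFDerivAt.comp x ((hasFDerivAt_cylCoords_fst hx).prodMk (hasFDerivAt_coord 2 x)))
    |>.congr_fderiv ?_
  ext v
  simp only [comp_apply, prod_apply, add_apply, smul_apply, proj_apply, smul_eq_mul]
  rw [apply_pair, partialR, partialZ, smul_eq_mul, smul_eq_mul]
  ring

theorem curl_cylField {Fr Fφ Fz : ℝ × ℝ → ℝ} {x : Fin 3 → ℝ} (hx : 0 < (cylCoords x).1)
    (hFr : DifferentiableAt ℝ Fr (cylCoords x)) (hFφ : DifferentiableAt ℝ Fφ (cylCoords x))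
    (hFz : DifferentiableAt ℝ Fz (cylCoords x)) :
    curl (cylField Fr Fφ Fz) x = cylVec x (-partialZ Fφ (cylCoords x))
      (partialZ Fr (cylCoords x) - partialR Fz (cylCoords x))
      (partialR Fφ (cylCoords x) + Fφ (cylCoords x) / (cylCoords x).1) := by
  have hr := hasFDerivAt_comp_cylCoords hx hFr
  have hφ := hasFDerivAt_comp_cylCoords hx hFφ
  have hz := hasFDerivAt_comp_cylCoords hx hFz
  have hc := (hasFDerivAt_coord 0 x).div (hasFDerivAt_cylCoords_fst hx) hx.ne'
  have hs := (hasFDerivAt_coord 1 x).div (hasFDerivAt_cylCoords_fst hx) hx.ne'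
  have h0 : HasFDerivAt (fun y => cylField Fr Fφ Fz y 0) _ x := (hr.mul hc).sub (hφ.mul hs)
  have h1 : HasFDerivAt (fun y => cylField Fr Fφ Fz y 1) _ x := (hr.mul hs).add (hφ.mul hc)
  have h2 : HasFDerivAt (fun y => cylField Fr Fφ Fz y 2) _ x := hz
  have hr2 := sq_cylCoords_fst x
  have hr0 := hx.ne'
  ext i
  fin_cases i <;>
    simp only [curl, pd, cylVec, h0.fderiv, h1.fderiv, h2.fderiv, add_apply, sub_apply, smul_apply,
      proj_apply, smul_eq_mul, Pi.single_apply, Fin.isValue, Fin.reduceEq, ↓reduceIte,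
      Fin.zero_eta, Fin.mk_one, Fin.reduceFinMk, Matrix.cons_val_zero, Matrix.cons_val_one,
      Matrix.cons_val, mul_zero, mul_one, add_zero, zero_add, sub_zero, zero_sub] <;>
    field_simp
  · ring
  · ring
  · linear_combination (Fφ (cylCoords x) - (cylCoords x).1 * partialR Fφ (cylCoords x)) * hr2

lemma smul_cylVec (x : Fin 3 → ℝ) (k a b c : ℝ) :
    k • cylVec x a b c = cylVec x (k * a) (k * b) (k * c) := by
  ext i
  fin_cases i <;>
    simp only [cylVec, Pi.smul_apply, Fin.isValue, Fin.zero_eta, Fin.mk_one, Fin.reduceFinMk,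
      Matrix.cons_val_zero, Matrix.cons_val_one, Matrix.cons_val, smul_eq_mul] <;>
    ring

lemma pd_comp_cylCoords {f : ℝ × ℝ → ℝ} {x : Fin 3 → ℝ} (hx : 0 < (cylCoords x).1)
    (hf : DifferentiableAt ℝ f (cylCoords x)) (i : Fin 3) :
    pd i (fun y => f (cylCoords y)) x =
      cylVec x (partialR f (cylCoords x)) 0 (partialZ f (cylCoords x)) i := by
  rw [pd, (hasFDerivAt_comp_cylCoords hx hf).fderiv]
  fin_cases i <;>
    simp only [cylVec, add_apply, smul_apply, proj_apply, smul_eq_mul, Pi.single_apply, Fin.isValue,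
      Fin.reduceEq, ↓reduceIte, Fin.zero_eta, Fin.mk_one, Fin.reduceFinMk, Matrix.cons_val_zero,
      Matrix.cons_val_one, Matrix.cons_val, mul_zero, mul_one, add_zero, zero_add, zero_mul,
      sub_zero] <;>
    ring

lemma sum_cylVec_mul_cylVec {x : Fin 3 → ℝ} (hx : 0 < (cylCoords x).1) (a b c a' b' c' : ℝ) :
    ∑ i, cylVec x a b c i * cylVec x a' b' c' i = a * a' + b * b' + c * c' := by
  have hr0 := hx.ne'
  simp only [cylVec, Fin.sum_univ_three, Fin.isValue, Matrix.cons_val_zero, Matrix.cons_val_one,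
    Matrix.cons_val, add_left_inj]
  field_simp
  rw [sq_cylCoords_fst]
  ring

lemma sum_cylField_mul_pd_comp_cylCoords {Fr Fφ Fz f : ℝ × ℝ → ℝ} {x : Fin 3 → ℝ}
    (hx : 0 < (cylCoords x).1) (hf : DifferentiableAt ℝ f (cylCoords x)) :
    ∑ i, cylField Fr Fφ Fz x i * pd i (fun y => f (cylCoords y)) x =
      Fr (cylCoords x) * partialR f (cylCoords x)
        + Fz (cylCoords x) * partialZ f (cylCoords x) := by
  simp only [pd_comp_cylCoords hx hf]
  rw [cylField, sum_cylVec_mul_cylVec hx]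
  ring

theorem curl_gradShafranovField {lam : ℝ} {ψ : ℝ × ℝ → ℝ} {x : Fin 3 → ℝ}
    (hx : 0 < (cylCoords x).1) (hψ : ContDiffAt ℝ 2 ψ (cylCoords x))
    (hGS : partialR (partialR ψ) (cylCoords x) - 1 / (cylCoords x).1 * partialR ψ (cylCoords x)
      + partialZ (partialZ ψ) (cylCoords x) = -lam ^ 2 * ψ (cylCoords x)) :
    curl (gradShafranovField lam ψ) x = lam • gradShafranovField lam ψ x := by
  have dψ := (hψ.differentiableAt two_ne_zero).hasFDerivAt
  have dψr : HasFDerivAt (partialR ψ) (fderiv ℝ (partialR ψ) (cylCoords x)) (cylCoords x) :=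
    (hψ.differentiableAt_fderiv_apply le_rfl (1, 0)).hasFDerivAt
  have dψz : HasFDerivAt (partialZ ψ) (fderiv ℝ (partialZ ψ) (cylCoords x)) (cylCoords x) :=
    (hψ.differentiableAt_fderiv_apply le_rfl (0, 1)).hasFDerivAt
  have dFr := dψz.fun_neg.div (hasFDerivAt_fst (p := cylCoords x)) hx.ne'
  have dFφ := (dψ.const_mul lam).div (hasFDerivAt_fst (p := cylCoords x)) hx.ne'
  have dFz := dψr.div (hasFDerivAt_fst (p := cylCoords x)) hx.ne'
  rw [gradShafranovField, curl_cylField hx dFr.differentiableAt dFφ.differentiableAt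
    dFz.differentiableAt, cylField, smul_cylVec, dFr.partialZ_eq, dFφ.partialZ_eq,
    dFφ.partialR_eq, dFz.partialR_eq]
  simp only [partialR, partialZ] at hGS ⊢
  have hr0 := hx.ne'
  congr 1
  · simp only [sub_apply, smul_apply, smul_eq_mul, coe_fst', mul_zero, sub_zero]; ring
  · simp only [smul_neg, sub_apply, neg_apply, smul_apply, smul_eq_mul, coe_fst', mul_zero,
      sub_zero, mul_one]
    linear_combination (-1 / (cylCoords x).1) * hGS
  · simp only [sub_apply, smul_apply, smul_eq_mul, coe_fst', mul_one]; field_simp; ring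

theorem gradShafranovField_dot_grad_eq_zero {lam : ℝ} {ψ : ℝ × ℝ → ℝ} {x : Fin 3 → ℝ}
    (hx : 0 < (cylCoords x).1) (hψ : DifferentiableAt ℝ ψ (cylCoords x)) :
    ∑ i, gradShafranovField lam ψ x i * pd i (fun y => ψ (cylCoords y)) x = 0 := by
  rw [gradShafranovField, sum_cylField_mul_pd_comp_cylCoords hx hψ]
  ring

/-- if `ψ` solves the eigenvalue Grad–Shafranov equation
`ψ_rr − (1/r)ψ_r + ψ_zz = −λ²ψ` on an open set `U` of the half-plane `{r > 0}`, then the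
field `B = (λψ/r)φ̂ + (1/r)∇ψ×φ̂`, written in Cartesian components, satisfies the
Beltrami equation `∇×B = λB` on the axisymmetric region `Ω` generated by `U`, and is
tangent to the level surfaces of the flux function `Ψ(x,y,z) = ψ(√(x²+y²), z)`. -/
theorem grad_shafranov_gives_beltrami_field
    (lam : ℝ) (U : Set (ℝ × ℝ)) (hU : IsOpen U)
    (hUhalf : ∀ p ∈ U, 0 < p.1)
    (ψ : ℝ × ℝ → ℝ) (hψ : ContDiffOn ℝ 2 ψ U)
    (ψr ψz ψrr ψzz : ℝ × ℝ → ℝ)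
    (hψr : ψr = fun p => fderiv ℝ ψ p (1, 0))
    (hψz : ψz = fun p => fderiv ℝ ψ p (0, 1))
    (hψrr : ψrr = fun p => fderiv ℝ ψr p (1, 0))
    (hψzz : ψzz = fun p => fderiv ℝ ψz p (0, 1))
    (hGS : ∀ p ∈ U, ψrr p - (1 / p.1) * ψr p + ψzz p = -lam ^ 2 * ψ p)
    (B : (Fin 3 → ℝ) → (Fin 3 → ℝ))
    (hB : B = fun x =>
      ![-(ψz (Real.sqrt (x 0 ^ 2 + x 1 ^ 2), x 2)) * x 0 / (Real.sqrt (x 0 ^ 2 + x 1 ^ 2)) ^ 2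
          - lam * ψ (Real.sqrt (x 0 ^ 2 + x 1 ^ 2), x 2) * x 1 / (Real.sqrt (x 0 ^ 2 + x 1 ^ 2)) ^ 2,
        -(ψz (Real.sqrt (x 0 ^ 2 + x 1 ^ 2), x 2)) * x 1 / (Real.sqrt (x 0 ^ 2 + x 1 ^ 2)) ^ 2
          + lam * ψ (Real.sqrt (x 0 ^ 2 + x 1 ^ 2), x 2) * x 0 / (Real.sqrt (x 0 ^ 2 + x 1 ^ 2)) ^ 2,
        ψr (Real.sqrt (x 0 ^ 2 + x 1 ^ 2), x 2) / Real.sqrt (x 0 ^ 2 + x 1 ^ 2)])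
    (Ψ : (Fin 3 → ℝ) → ℝ)
    (hΨ : Ψ = fun x => ψ (Real.sqrt (x 0 ^ 2 + x 1 ^ 2), x 2)) :
    ∀ x : Fin 3 → ℝ, (Real.sqrt (x 0 ^ 2 + x 1 ^ 2), x 2) ∈ U →
      curl B x = lam • B x ∧ (∑ i, B x i * pd i Ψ x) = 0 := by
  subst hψrr hψzz
  replace hψr : ψr = partialR ψ := hψr
  replace hψz : ψz = partialZ ψ := hψz
  subst hψr hψz
  replace hB : B = gradShafranovField lam ψ := by
    subst hB
    funext y
    ext i
    fin_cases i <;>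
      simp only [gradShafranovField, cylField, cylVec, cylCoords, Fin.isValue, Fin.zero_eta,
        Fin.mk_one, Fin.reduceFinMk, Matrix.cons_val_zero, Matrix.cons_val_one, Matrix.cons_val,
        neg_mul] <;>
      ring
  replace hΨ : Ψ = fun y => ψ (cylCoords y) := hΨ
  subst hB hΨ
  intro x hx
  have hr : 0 < (cylCoords x).1 := hUhalf _ hx
  have hψx : ContDiffAt ℝ 2 ψ (cylCoords x) := hψ.contDiffAt (hU.mem_nhds hx)
  exact ⟨curl_gradShafranovField hr hψx (hGS _ hx),
    gradShafranovField_dot_grad_eq_zero hr (hψx.differentiableAt two_ne_zero)⟩
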